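/- arXiv:2508.13409 — 10 statements merged into one kernel-verified Lean document; each statement's English description precedes it below -/
import Mathlib

section
/- There exists a proportion n in the open interval (0,1) with Ψ(n) < ψ_A if and only if b·ρ < 1. (Existence of a competitiveness region for the joint pricer, Lemma 1, first part.) -/
/-- There exists a proportion `n ∈ (0,1)` with `Ψ n < ψA` if and only if
`b·ρ < 1` (existence of a competitiveness region, Lemma 1, first part). -/
theorem competitiveness_region_exists_iff
    (b ρ ψA πA πB : ℝ)
    (hb : 1 ≤ b) (hρ1 : -1 ≤ ρ) (hρ2 : ρ < 1)
    (hψA : 0 < ψA) (hπA : 0 < πA) (hπB : 0 < πB)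
    (lam1 lam2 : ℝ)
    (hlam1 : lam1 = 1 + b ^ 2 - 2 * b * ρ) (hlam2 : lam2 = 1 - b * ρ)
    (ntil : ℝ → ℝ)
    (hntil : ∀ n, ntil n = n * πB / ((1 - n) * πA + n * πB))
    (Ψ : ℝ → ℝ)
    (hΨ : ∀ n, Ψ n = ψA * Real.sqrt (lam1 * (ntil n) ^ 2 - 2 * lam2 * (ntil n) + 1)) :
    (∃ n ∈ Set.Ioo (0 : ℝ) 1, Ψ n < ψA) ↔ b * ρ < 1 := by
  have hlam1pos : 0 < lam1 := by nlinarith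
  constructor
  · rintro ⟨n, ⟨hn0, hn1⟩, hΨn⟩
    have hD : 0 < (1 - n) * πA + n * πB := by nlinarith
    have hx : 0 < ntil n := by
      rw [hntil n]
      positivity
    set x := ntil n with hxdef
    have hsqrt : Real.sqrt (lam1 * x ^ 2 - 2 * lam2 * x + 1) < 1 := by
      rw [hΨ n] at hΨn
      nlinarith
    have hy : lam1 * x ^ 2 - 2 * lam2 * x + 1 < 1 := by
      rw [Real.sqrt_lt' one_pos] at hsqrt
      nlinarith
    nlinarith
  · intro hbρ
    have hlam2 : 0 < lam2 := by nlinarith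
    set x : ℝ := min (1/2) (lam2 / lam1) with hxdef
    have hx0 : 0 < x := by
      apply lt_min (by norm_num)
      positivity
    have hx1 : x < 1 := lt_of_le_of_lt (min_le_left _ _) (by norm_num)
    have hxlam : lam1 * x ≤ lam2 := by
      have := min_le_right (1/2 : ℝ) (lam2 / lam1)
      calc lam1 * x ≤ lam1 * (lam2 / lam1) := by
            apply mul_le_mul_of_nonneg_left this hlam1pos.le
        _ = lam2 := by field_simp
    set n : ℝ := x * πA / (πB * (1 - x) + x * πA) with hndef
    have hD : 0 < πB * (1 - x) + x * πA := by nlinarith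
    have hn0 : 0 < n := by positivity
    have hn1 : n < 1 := by
      rw [hndef, div_lt_one hD]
      nlinarith
    refine ⟨n, ⟨hn0, hn1⟩, ?_⟩
    have hden : 0 < (1 - n) * πA + n * πB := by nlinarith
    have hn' : n * (πB * (1 - x) + x * πA) = x * πA := by
      rw [hndef]; field_simp
    have hnx : ntil n = x := by
      rw [hntil n]
      rw [div_eq_iff (ne_of_gt hden)]
      linear_combination hn'
    rw [hΨ n, hnx]
    have harg : lam1 * x ^ 2 - 2 * lam2 * x + 1 < 1 := by nlinarith
    have hsq : Real.sqrt (lam1 * x ^ 2 - 2 * lam2 * x + 1) < 1 := by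
      rw [Real.sqrt_lt' one_pos]
      nlinarith
    nlinarith
end

section
/- Assume b·ρ < 1. Then n_min := λ₂·π_A/(λ₂·π_A + (λ₁−λ₂)·π_B) lies in (0,1), it satisfies Ψ(n_min) = ψ_A·√((λ₁−λ₂²)/λ₁) < ψ_A, and n_min is the unique global minimizer of Ψ on [0,1]: Ψ(n) > Ψ(n_min) for every n ∈ [0,1] with n ≠ n_min. (Lemma 1, minimum loading.) -/
/-- Under `b·ρ < 1`, the proportion `n_min = λ₂π_A/(λ₂π_A + (λ₁−λ₂)π_B)`
lies in `(0,1)`, satisfies `Ψ(n_min) = ψ_A·√((λ₁−λ₂²)/λ₁) < ψ_A`, and is the unique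
global minimizer of `Ψ` on `[0,1]` (Lemma 1, minimum loading). -/
theorem minimum_joint_loading
    (b ρ ψA πA πB : ℝ)
    (hb : 1 ≤ b) (hρ1 : -1 ≤ ρ) (hρ2 : ρ < 1)
    (hψA : 0 < ψA) (hπA : 0 < πA) (hπB : 0 < πB)
    (lam1 lam2 : ℝ)
    (hlam1 : lam1 = 1 + b ^ 2 - 2 * b * ρ) (hlam2 : lam2 = 1 - b * ρ)
    (ntil : ℝ → ℝ)
    (hntil : ∀ n, ntil n = n * πB / ((1 - n) * πA + n * πB))
    (Ψ : ℝ → ℝ)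
    (hΨ : ∀ n, Ψ n = ψA * Real.sqrt (lam1 * (ntil n) ^ 2 - 2 * lam2 * (ntil n) + 1))
    (hbρ : b * ρ < 1)
    (nmin : ℝ)
    (hnmin : nmin = lam2 * πA / (lam2 * πA + (lam1 - lam2) * πB)) :
    nmin ∈ Set.Ioo (0 : ℝ) 1 ∧
      Ψ nmin = ψA * Real.sqrt ((lam1 - lam2 ^ 2) / lam1) ∧
      Ψ nmin < ψA ∧
      ∀ n ∈ Set.Icc (0 : ℝ) 1, n ≠ nmin → Ψ nmin < Ψ n := by
  have hl2 : 0 < lam2 := by rw [hlam2]; linarith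
  have hdiff : 0 < lam1 - lam2 := by
    have : 0 < b * (b - ρ) := mul_pos (by linarith) (by linarith)
    rw [hlam1, hlam2]; nlinarith
  have hl1 : 0 < lam1 := by linarith
  have hD : 0 < lam2 * πA + (lam1 - lam2) * πB :=
    add_pos (mul_pos hl2 hπA) (mul_pos hdiff hπB)
  have hmem : nmin ∈ Set.Ioo (0 : ℝ) 1 := by
    constructor
    · rw [hnmin]; exact div_pos (mul_pos hl2 hπA) hD
    · rw [hnmin, div_lt_one hD]; nlinarith [mul_pos hdiff hπB]
  have hden : (1 - nmin) * πA + nmin * πB > 0 := by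
    have h1 := hmem.1; have h2 := hmem.2
    nlinarith
  have hnt : ntil nmin = lam2 / lam1 := by
    rw [hntil, hnmin]
    rw [div_eq_div_iff (by nlinarith [hden]) (ne_of_gt hl1)]
    field_simp
    ring
  have hrad : lam1 * (ntil nmin) ^ 2 - 2 * lam2 * (ntil nmin) + 1
      = (lam1 - lam2 ^ 2) / lam1 := by
    rw [hnt]; field_simp; ring
  have hΨmin : Ψ nmin = ψA * Real.sqrt ((lam1 - lam2 ^ 2) / lam1) := by
    rw [hΨ, hrad]
  have hnum : 0 ≤ lam1 - lam2 ^ 2 := by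
    rw [hlam1, hlam2]; nlinarith [sq_nonneg b, mul_nonneg (mul_nonneg (sq_nonneg b) (by linarith : (0:ℝ) ≤ 1 - ρ)) (by linarith : (0:ℝ) ≤ 1 + ρ)]
  have hlt1 : (lam1 - lam2 ^ 2) / lam1 < 1 := by
    rw [div_lt_one hl1]; nlinarith [sq_nonneg lam2, hl2]
  have hΨlt : Ψ nmin < ψA := by
    rw [hΨmin]
    have : Real.sqrt ((lam1 - lam2 ^ 2) / lam1) < 1 := by
      rw [show (1:ℝ) = Real.sqrt 1 by simp]
      exact Real.sqrt_lt_sqrt (div_nonneg hnum hl1.le) hlt1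
    nlinarith [this]
  refine ⟨hmem, hΨmin, hΨlt, ?_⟩
  intro n hn hne
  have hdenn : 0 < (1 - n) * πA + n * πB := by
    obtain ⟨h0, h1⟩ := hn
    have h2 : 0 ≤ (1 - n) * πA := mul_nonneg (by linarith) hπA.le
    rcases h0.eq_or_lt with h | h
    · rw [← h]; ring_nf; linarith
    · linarith [h2, mul_pos h hπB]
  have hx : ntil n ≠ lam2 / lam1 := by
    intro h
    apply hne
    rw [hntil] at h
    rw [div_eq_div_iff (ne_of_gt hdenn) (ne_of_gt hl1)] at h
    rw [hnmin, eq_div_iff (ne_of_gt hD)]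
    linear_combination h
  have hsq : 0 < (ntil n - lam2 / lam1) ^ 2 :=
    lt_of_le_of_ne (sq_nonneg _) (Ne.symm (pow_ne_zero 2 (sub_ne_zero_of_ne hx)))
  have hgt : (lam1 - lam2 ^ 2) / lam1 < lam1 * (ntil n) ^ 2 - 2 * lam2 * (ntil n) + 1 := by
    have key : lam1 * (ntil n) ^ 2 - 2 * lam2 * (ntil n) + 1 - (lam1 - lam2 ^ 2) / lam1
        = lam1 * (ntil n - lam2 / lam1) ^ 2 := by
      field_simp; ring
    nlinarith [mul_pos hl1 hsq]
  rw [hΨmin, hΨ]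
  exact mul_lt_mul_of_pos_left (Real.sqrt_lt_sqrt (div_nonneg hnum hl1.le) hgt) hψA
end

section
/- For every n ∈ [0,1] one has Ψ(n) ≤ Ψ(1), and Ψ(1) = ψ_B; that is, the maximum required joint loading over all portfolio compositions equals the stand-alone loading of the riskier business line B. (Lemma 1, maximum loading ψ_max = ψ_B.) -/
/-! The radicand `λ₁ x² − 2 λ₂ x + 1` is a convex quadratic in `x` (as `λ₁ ≥ (b − 1)² ≥ 0`), so on
`[0, 1]` it is bounded by its endpoint values `1` and `b²`. The share `ñ(n)` of line B stays in
`[0, 1]`, and `ñ(1) = 1`, so `Ψ` is maximal at `n = 1`, where it equals `ψ_A · b = ψ_B`. -/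

open Set

lemma weighted_share_mem_Icc {p q n : ℝ} (hp : 0 < p) (hq : 0 < q) (hn : n ∈ Icc (0 : ℝ) 1) :
    n * q / ((1 - n) * p + n * q) ∈ Icc (0 : ℝ) 1 := by
  obtain ⟨hn0, hn1⟩ := hn
  have hden : 0 < (1 - n) * p + n * q :=
    convex_Ioi (0 : ℝ) hp hq (sub_nonneg.2 hn1) hn0 (by ring)
  refine ⟨by positivity, (div_le_one hden).2 ?_⟩
  nlinarith [mul_nonneg (sub_nonneg.2 hn1) hp.le]

lemma quadratic_le_of_endpoints {a c d M x : ℝ} (ha : 0 ≤ a) (hx : x ∈ Icc (0 : ℝ) 1)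
    (h0 : d ≤ M) (h1 : a + c + d ≤ M) : a * x ^ 2 + c * x + d ≤ M := by
  obtain ⟨hx0, hx1⟩ := hx
  nlinarith [mul_nonneg ha (mul_nonneg hx0 (sub_nonneg.2 hx1))]

lemma joint_radicand_le_sq {b ρ x : ℝ} (hb : 1 ≤ b) (hρ : ρ ≤ 1) (hx : x ∈ Icc (0 : ℝ) 1) :
    (1 + b ^ 2 - 2 * b * ρ) * x ^ 2 - 2 * (1 - b * ρ) * x + 1 ≤ b ^ 2 := by
  have hlam1 : 0 ≤ 1 + b ^ 2 - 2 * b * ρ := by nlinarith [sq_nonneg (b - 1)]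
  have h := quadratic_le_of_endpoints (c := -(2 * (1 - b * ρ))) (d := 1) (M := b ^ 2) hlam1 hx
    (by nlinarith) (le_of_eq (by ring))
  linarith

theorem maximum_joint_loading_general
    (b ρ ψA πA πB : ℝ)
    (hb : 1 ≤ b) (hρ2 : ρ < 1)
    (hψA : 0 < ψA) (hπA : 0 < πA) (hπB : 0 < πB)
    (lam1 lam2 ψB : ℝ)
    (hlam1 : lam1 = 1 + b ^ 2 - 2 * b * ρ) (hlam2 : lam2 = 1 - b * ρ)
    (hψB : ψB = b * ψA)
    (ntil : ℝ → ℝ)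
    (hntil : ∀ n, ntil n = n * πB / ((1 - n) * πA + n * πB))
    (Ψ : ℝ → ℝ)
    (hΨ : ∀ n, Ψ n = ψA * Real.sqrt (lam1 * (ntil n) ^ 2 - 2 * lam2 * (ntil n) + 1)) :
    (∀ n ∈ Set.Icc (0 : ℝ) 1, Ψ n ≤ Ψ 1) ∧ Ψ 1 = ψB := by
  subst hlam1 hlam2 hψB
  have hntil1 : ntil 1 = 1 := by
    rw [hntil]
    field_simp
    ring
  have hΨ1 : Ψ 1 = b * ψA := by
    have hradicand : (1 + b ^ 2 - 2 * b * ρ) * 1 ^ 2 - 2 * (1 - b * ρ) * 1 + 1 = b ^ 2 := by ring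
    rw [hΨ, hntil1, hradicand, Real.sqrt_sq (by linarith), mul_comm]
  refine ⟨fun n hn => ?_, hΨ1⟩
  have hshare : ntil n ∈ Icc (0 : ℝ) 1 := hntil n ▸ weighted_share_mem_Icc hπA hπB hn
  calc Ψ n ≤ ψA * Real.sqrt (b ^ 2) := by
        rw [hΨ]
        gcongr
        exact joint_radicand_le_sq hb hρ2.le hshare
    _ = Ψ 1 := by rw [hΨ1, Real.sqrt_sq (by linarith), mul_comm]

/-- For every `n ∈ [0,1]`, `Ψ(n) ≤ Ψ(1)` and `Ψ(1) = ψ_B`; the maximum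
required joint loading equals the stand-alone loading of the riskier line B. -/
theorem maximum_joint_loading
    (b ρ ψA πA πB : ℝ)
    (hb : 1 ≤ b) (hρ1 : -1 ≤ ρ) (hρ2 : ρ < 1)
    (hψA : 0 < ψA) (hπA : 0 < πA) (hπB : 0 < πB)
    (lam1 lam2 ψB : ℝ)
    (hlam1 : lam1 = 1 + b ^ 2 - 2 * b * ρ) (hlam2 : lam2 = 1 - b * ρ)
    (hψB : ψB = b * ψA)
    (ntil : ℝ → ℝ)
    (hntil : ∀ n, ntil n = n * πB / ((1 - n) * πA + n * πB))
    (Ψ : ℝ → ℝ)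
    (hΨ : ∀ n, Ψ n = ψA * Real.sqrt (lam1 * (ntil n) ^ 2 - 2 * lam2 * (ntil n) + 1)) :
    (∀ n ∈ Set.Icc (0 : ℝ) 1, Ψ n ≤ Ψ 1) ∧ Ψ 1 = ψB :=
  maximum_joint_loading_general b ρ ψA πA πB hb hρ2 hψA hπA hπB lam1 lam2 ψB hlam1 hlam2 hψB ntil
    hntil Ψ hΨ
end

section
/- Assume b > 1 and b·ρ < 1. Then n_ct := 2·λ₂·π_A/(2·λ₂·π_A + (λ₁−2·λ₂)·π_B) lies in (0,1), Ψ(n_ct) = ψ_A, Ψ(n) < ψ_A for every n ∈ (0, n_ct), and Ψ(n) > ψ_A for every n ∈ (n_ct, 1]. (Lemma 2: existence of the critical threshold beyond which business line A subsidizes business line B.) -/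
/-- Under `b > 1` and `b·ρ < 1`, the critical threshold
`n_ct = 2λ₂π_A/(2λ₂π_A + (λ₁−2λ₂)π_B)` lies in `(0,1)`, `Ψ(n_ct) = ψ_A`,
`Ψ(n) < ψ_A` for `n ∈ (0, n_ct)` and `Ψ(n) > ψ_A` for `n ∈ (n_ct, 1]` (Lemma 2). -/
theorem critical_threshold
    (b ρ ψA πA πB : ℝ)
    (hb : 1 ≤ b) (hρ1 : -1 ≤ ρ) (hρ2 : ρ < 1)
    (hψA : 0 < ψA) (hπA : 0 < πA) (hπB : 0 < πB)
    (lam1 lam2 : ℝ)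
    (hlam1 : lam1 = 1 + b ^ 2 - 2 * b * ρ) (hlam2 : lam2 = 1 - b * ρ)
    (ntil : ℝ → ℝ)
    (hntil : ∀ n, ntil n = n * πB / ((1 - n) * πA + n * πB))
    (Ψ : ℝ → ℝ)
    (hΨ : ∀ n, Ψ n = ψA * Real.sqrt (lam1 * (ntil n) ^ 2 - 2 * lam2 * (ntil n) + 1))
    (hb1 : 1 < b) (hbρ : b * ρ < 1)
    (nct : ℝ)
    (hnct : nct = 2 * lam2 * πA / (2 * lam2 * πA + (lam1 - 2 * lam2) * πB)) :
    nct ∈ Set.Ioo (0 : ℝ) 1 ∧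
      Ψ nct = ψA ∧
      (∀ n ∈ Set.Ioo (0 : ℝ) nct, Ψ n < ψA) ∧
      (∀ n ∈ Set.Ioc nct 1, Ψ n > ψA) := by
  have hl2 : 0 < lam2 := by rw [hlam2]; linarith
  have hdiff : lam1 - 2 * lam2 = b ^ 2 - 1 := by rw [hlam1, hlam2]; ring
  have hb2 : 0 < lam1 - 2 * lam2 := by rw [hdiff]; nlinarith
  have hl1 : 0 < lam1 := by linarith
  have hD : 0 < 2 * lam2 * πA + (lam1 - 2 * lam2) * πB := by
    have h1 := mul_pos (mul_pos two_pos hl2) hπA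
    have h2 := mul_pos hb2 hπB
    nlinarith
  have hDne : (2 * lam2 * πA + (lam1 - 2 * lam2) * πB) ≠ 0 := ne_of_gt hD
  have hnct0 : 0 < nct := by
    rw [hnct]; exact div_pos (by positivity) hD
  have hnct1 : nct < 1 := by
    rw [hnct, div_lt_one hD]
    nlinarith [mul_pos hb2 hπB]
  -- nonnegativity of the quadratic
  have hQnn : ∀ x : ℝ, 0 ≤ lam1 * x ^ 2 - 2 * lam2 * x + 1 := by
    intro x
    have hid : lam1 - lam2 ^ 2 = b ^ 2 * (1 - ρ ^ 2) := by rw [hlam1, hlam2]; ring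
    have h0 : 0 ≤ (1 - ρ) * (1 + ρ) := mul_nonneg (by linarith) (by linarith)
    have h : 0 ≤ lam1 - lam2 ^ 2 := by
      rw [hid]; nlinarith [sq_nonneg b, mul_nonneg (sq_nonneg b) h0]
    nlinarith [sq_nonneg (lam2 * x - 1), mul_nonneg h (sq_nonneg x)]
  -- denominator positivity
  have hden : ∀ n : ℝ, 0 ≤ n → n ≤ 1 → 0 < (1 - n) * πA + n * πB := by
    intro n h0 h1
    rcases eq_or_lt_of_le h1 with h | h
    · subst h; simpa using hπB
    · have := mul_nonneg h0 hπB.le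
      nlinarith
  -- value of ntil at nct
  have hval : ntil nct = 2 * lam2 / lam1 := by
    have h1 : (1 - nct) * πA + nct * πB
        = πA * πB * lam1 / (2 * lam2 * πA + (lam1 - 2 * lam2) * πB) := by
      rw [hnct]; field_simp; ring
    have h2 : nct * πB
        = 2 * lam2 * πA * πB / (2 * lam2 * πA + (lam1 - 2 * lam2) * πB) := by
      rw [hnct]; ring
    rw [hntil, h1, h2]
    field_simp
  have hQct : lam1 * (ntil nct) ^ 2 - 2 * lam2 * (ntil nct) + 1 = 1 := by
    rw [hval]; field_simp; ring
  refine ⟨⟨hnct0, hnct1⟩, ?_, ?_, ?_⟩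
  · rw [hΨ, hQct, Real.sqrt_one, mul_one]
  · rintro n ⟨hn0, hn1⟩
    have hnle1 : n ≤ 1 := le_of_lt (lt_trans hn1 hnct1)
    have hdn : 0 < (1 - n) * πA + n * πB := hden n hn0.le hnle1
    have hx0 : 0 < ntil n := by
      rw [hntil]; exact div_pos (mul_pos hn0 hπB) hdn
    have hnD : n * (2 * lam2 * πA + (lam1 - 2 * lam2) * πB) < 2 * lam2 * πA := by
      have := (lt_div_iff₀ hD).mp (hnct ▸ hn1)
      linarith
    have hxlt : ntil n * lam1 < 2 * lam2 := by
      rw [hntil, div_mul_eq_mul_div, div_lt_iff₀ hdn]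
      have key : n * πB * lam1 - 2 * lam2 * ((1 - n) * πA + n * πB)
          = n * (2 * lam2 * πA + (lam1 - 2 * lam2) * πB) - 2 * lam2 * πA := by ring
      linarith
    have hQlt : lam1 * (ntil n) ^ 2 - 2 * lam2 * (ntil n) + 1 < 1 := by
      have h := mul_pos hx0 (show 0 < 2 * lam2 - ntil n * lam1 by linarith)
      have key : lam1 * (ntil n) ^ 2 - 2 * lam2 * (ntil n)
          = -(ntil n * (2 * lam2 - ntil n * lam1)) := by ring
      linarith
    have hs : Real.sqrt (lam1 * (ntil n) ^ 2 - 2 * lam2 * (ntil n) + 1) < 1 := by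
      have := Real.sqrt_lt_sqrt (hQnn (ntil n)) hQlt
      simpa using this
    rw [hΨ]
    exact mul_lt_of_lt_one_right hψA hs
  · rintro n ⟨hn1, hnle1⟩
    have hn0 : 0 < n := lt_trans hnct0 hn1
    have hdn : 0 < (1 - n) * πA + n * πB := hden n hn0.le hnle1
    have hx0 : 0 < ntil n := by
      rw [hntil]; exact div_pos (mul_pos hn0 hπB) hdn
    have hnD : 2 * lam2 * πA < n * (2 * lam2 * πA + (lam1 - 2 * lam2) * πB) := by
      have := (div_lt_iff₀ hD).mp (hnct ▸ hn1)
      linarith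
    have hxgt : 2 * lam2 < ntil n * lam1 := by
      rw [hntil, div_mul_eq_mul_div, lt_div_iff₀ hdn]
      have key : n * πB * lam1 - 2 * lam2 * ((1 - n) * πA + n * πB)
          = n * (2 * lam2 * πA + (lam1 - 2 * lam2) * πB) - 2 * lam2 * πA := by ring
      linarith
    have hQgt : 1 < lam1 * (ntil n) ^ 2 - 2 * lam2 * (ntil n) + 1 := by
      have h := mul_pos hx0 (show 0 < ntil n * lam1 - 2 * lam2 by linarith)
      have key : lam1 * (ntil n) ^ 2 - 2 * lam2 * (ntil n)
          = ntil n * (ntil n * lam1 - 2 * lam2) := by ring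
      linarith
    have hs : 1 < Real.sqrt (lam1 * (ntil n) ^ 2 - 2 * lam2 * (ntil n) + 1) := by
      have := Real.sqrt_lt_sqrt zero_le_one hQgt
      simpa using this
    rw [hΨ]
    exact lt_mul_of_one_lt_right hψA hs
end

section
/- Assume ψ_A < ψ_B. Then D(ψ_A) > 0 if and only if q_B > (k_B/(k_B−1))·(1+ψ_B)/(1+ψ_A). (Endpoint characterization at ψ⋆ = ψ_A, i.e. at the critical proportion of market demand w^d = w_ct; this is the sufficiency of inequality (EqT1-1) in Theorem 1 for w^d = w_ct, stated as an equivalence as in the proof.) -/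
/-- For `ψ_A < ψ_B`, `D(ψ_A) > 0` iff
`q_B > (k_B/(k_B−1))·(1+ψ_B)/(1+ψ_A)` (endpoint characterization at `ψ⋆ = ψ_A`). -/
theorem D_pos_at_psiA_iff
    (NAT NBT πA πB qA qB ψA ψB : ℝ)
    (kA kB : ℕ) (hkA : 2 ≤ kA) (hkB : 2 ≤ kB)
    (hNAT : 0 < NAT) (hNBT : 0 < NBT) (hπA : 0 < πA) (hπB : 0 < πB)
    (hqA : 0 < qA) (hqB : 0 < qB)
    (hψA : 0 < ψA) (hAB : ψA ≤ ψB)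
    (D : ℝ → ℝ)
    (hD : ∀ ψs : ℝ, D ψs =
      ((NAT / (kA : ℝ)) * (1 - ((kA : ℝ) - 1) / (kA : ℝ) * qA * ((ψs - ψA) / (1 + ψA))) *
          ((1 + ψs) * πA) -
        (NAT / (kA : ℝ)) * ((1 + ψA) * πA)) +
      ((NBT / (kB : ℝ)) * (1 - ((kB : ℝ) - 1) / (kB : ℝ) * qB * ((ψs - ψB) / (1 + ψB))) *
          ((1 + ψs) * πB) -
        (NBT / (kB : ℝ)) * ((1 + ψB) * πB)))
    (hABs : ψA < ψB) :
    D ψA > 0 ↔ qB > ((kB : ℝ) / ((kB : ℝ) - 1)) * ((1 + ψB) / (1 + ψA)) := by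
  have hkB2 : (2 : ℝ) ≤ (kB : ℝ) := by exact_mod_cast hkB
  have hkB0 : (0 : ℝ) < (kB : ℝ) := by linarith
  have hkB1 : (0 : ℝ) < (kB : ℝ) - 1 := by linarith
  have h1A : (0 : ℝ) < 1 + ψA := by linarith
  have h1B : (0 : ℝ) < 1 + ψB := by linarith
  have hd : ψB - ψA > 0 := by linarith
  have hE : D ψA = (NBT / (kB : ℝ)) * πB * (ψB - ψA) / (1 + ψB) *
      (((kB : ℝ) - 1) / (kB : ℝ) * qB * (1 + ψA) - (1 + ψB)) := by
    rw [hD]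
    field_simp
    ring
  rw [hE]
  have hc : (0 : ℝ) < (NBT / (kB : ℝ)) * πB * (ψB - ψA) / (1 + ψB) := by positivity
  rw [gt_iff_lt, mul_pos_iff_of_pos_left hc, sub_pos, gt_iff_lt,
    div_mul_eq_mul_div, div_mul_eq_mul_div, lt_div_iff₀ hkB0, div_mul_div_comm,
    div_lt_iff₀ (by positivity : (0:ℝ) < ((kB:ℝ)-1)*(1+ψA))]
  constructor <;> intro h <;> nlinarith
end

section
/- Assume ψ_A < ψ_B. Then D(ψ_B) > 0 if and only if q_A < (k_A/(k_A−1))·(1+ψ_A)/(1+ψ_B). (Endpoint characterization at ψ⋆ = ψ_B, used in the proof of Theorem 1 for the case w^d > w_ct.) -/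
/-- For `ψ_A < ψ_B`, `D(ψ_B) > 0` iff
`q_A < (k_A/(k_A−1))·(1+ψ_A)/(1+ψ_B)` (endpoint characterization at `ψ⋆ = ψ_B`). -/
theorem D_pos_at_psiB_iff
    (NAT NBT πA πB qA qB ψA ψB : ℝ)
    (kA kB : ℕ) (hkA : 2 ≤ kA) (hkB : 2 ≤ kB)
    (hNAT : 0 < NAT) (hNBT : 0 < NBT) (hπA : 0 < πA) (hπB : 0 < πB)
    (hqA : 0 < qA) (hqB : 0 < qB)
    (hψA : 0 < ψA) (hAB : ψA ≤ ψB)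
    (D : ℝ → ℝ)
    (hD : ∀ ψs : ℝ, D ψs =
      ((NAT / (kA : ℝ)) * (1 - ((kA : ℝ) - 1) / (kA : ℝ) * qA * ((ψs - ψA) / (1 + ψA))) *
          ((1 + ψs) * πA) -
        (NAT / (kA : ℝ)) * ((1 + ψA) * πA)) +
      ((NBT / (kB : ℝ)) * (1 - ((kB : ℝ) - 1) / (kB : ℝ) * qB * ((ψs - ψB) / (1 + ψB))) *
          ((1 + ψs) * πB) -
        (NBT / (kB : ℝ)) * ((1 + ψB) * πB)))
    (hABs : ψA < ψB) :
    D ψB > 0 ↔ qA < ((kA : ℝ) / ((kA : ℝ) - 1)) * ((1 + ψA) / (1 + ψB)) := by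
  have hkA2 : (2:ℝ) ≤ (kA:ℝ) := by exact_mod_cast hkA
  have hk0 : (0:ℝ) < (kA:ℝ) := by linarith
  have hk1 : (0:ℝ) < (kA:ℝ) - 1 := by linarith
  have hA1 : (0:ℝ) < 1 + ψA := by linarith
  have hB1 : (0:ℝ) < 1 + ψB := by linarith
  have key : D ψB * ((kA:ℝ)^2 * (1 + ψA)) =
      NAT * πA * (ψB - ψA) * ((kA:ℝ) * (1 + ψA) - ((kA:ℝ) - 1) * qA * (1 + ψB)) := by
    rw [hD]
    rw [sub_self ψB, zero_div, mul_zero, sub_zero]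
    simp only [mul_one, sub_self, add_zero]
    field_simp
    ring
  have hfac : 0 < NAT * πA * (ψB - ψA) := by
    have := sub_pos.mpr hABs
    positivity
  have hrw : ((kA:ℝ) / ((kA:ℝ) - 1)) * ((1 + ψA) / (1 + ψB)) =
      ((kA:ℝ) * (1 + ψA)) / (((kA:ℝ) - 1) * (1 + ψB)) := div_mul_div_comm _ _ _ _
  rw [hrw, lt_div_iff₀ (by positivity)]
  constructor
  · intro h
    have h2 : 0 < NAT * πA * (ψB - ψA) * ((kA:ℝ) * (1 + ψA) - ((kA:ℝ) - 1) * qA * (1 + ψB)) := by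
      rw [← key]; exact mul_pos h (by positivity)
    have h3 : 0 < (kA:ℝ) * (1 + ψA) - ((kA:ℝ) - 1) * qA * (1 + ψB) := by
      by_contra hc
      push_neg at hc
      nlinarith
    nlinarith
  · intro h
    have h3 : 0 < (kA:ℝ) * (1 + ψA) - ((kA:ℝ) - 1) * qA * (1 + ψB) := by nlinarith
    have h2 : 0 < D ψB * ((kA:ℝ)^2 * (1 + ψA)) := by
      rw [key]; exact mul_pos hfac h3
    by_contra hc
    push_neg at hc
    nlinarith [mul_nonneg (neg_nonneg.mpr hc) (by positivity : (0:ℝ) ≤ (kA:ℝ)^2 * (1 + ψA))]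
end

section
/- Let ψ_min be a real with 0 ≤ ψ_min < ψ_A, and set η = ((N_B^T/k_B)·π_B·(ψ_B−ψ_min)) / ((N_A^T/k_A)·π_A·(ψ_A−ψ_min) + (N_B^T/k_B)·π_B·(ψ_B−ψ_min)). Then D(ψ_min) > 0 if and only if (1−η)·q_A·((k_A−1)/k_A)·((1+ψ_min)/(1+ψ_A)) + η·q_B·((k_B−1)/k_B)·((1+ψ_min)/(1+ψ_B)) > 1. (Endpoint characterization at ψ⋆ = ψ_min, used in the proof of Theorem 1 for the case w^d < w_ct.) -/
/-!
At `ψ⋆ = ψ_min` each line's contribution to `D` factorises as `w_i (X_i - 1)` with the positive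
weight `w_i = (N_i^T / k_i) π_i (ψ_i - ψ_min)` and `X_i = q_i ((k_i - 1) / k_i) (1 + ψ_min) / (1 + ψ_i)`.
Hence `D(ψ_min) > 0` iff the `w`-weighted mean of `X_A, X_B`, which is the left-hand side of the
criterion since `η = w_B / (w_A + w_B)`, exceeds `1`.
-/

lemma premium_change_eq (n π r q ψ₀ ψ : ℝ) (hψ₀ : 1 + ψ₀ ≠ 0) :
    n * (1 - r * q * ((ψ - ψ₀) / (1 + ψ₀))) * ((1 + ψ) * π) - n * ((1 + ψ₀) * π) =
      n * π * (ψ₀ - ψ) * (q * r * ((1 + ψ) / (1 + ψ₀)) - 1) := by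
  field_simp
  ring

lemma one_lt_weighted_mean_iff {a b : ℝ} (x y : ℝ) (hab : 0 < a + b) :
    0 < a * (x - 1) + b * (y - 1) ↔ 1 < (1 - b / (a + b)) * x + b / (a + b) * y := by
  have hmean : (1 - b / (a + b)) * x + b / (a + b) * y - 1 =
      (a * (x - 1) + b * (y - 1)) / (a + b) := by
    field_simp
    ring
  rw [← sub_pos (b := 1), hmean, div_pos_iff_of_pos_right hab]

theorem D_pos_at_psimin_iff_general
    (NAT NBT πA πB qA qB ψA ψB : ℝ)
    (kA kB : ℕ) (hkA : 2 ≤ kA) (hkB : 2 ≤ kB)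
    (hNAT : 0 < NAT) (hNBT : 0 < NBT) (hπA : 0 < πA) (hπB : 0 < πB)
    (hψA : 0 < ψA) (hAB : ψA ≤ ψB)
    (D : ℝ → ℝ)
    (hD : ∀ ψs : ℝ, D ψs =
      ((NAT / (kA : ℝ)) * (1 - ((kA : ℝ) - 1) / (kA : ℝ) * qA * ((ψs - ψA) / (1 + ψA))) *
          ((1 + ψs) * πA) -
        (NAT / (kA : ℝ)) * ((1 + ψA) * πA)) +
      ((NBT / (kB : ℝ)) * (1 - ((kB : ℝ) - 1) / (kB : ℝ) * qB * ((ψs - ψB) / (1 + ψB))) *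
          ((1 + ψs) * πB) -
        (NBT / (kB : ℝ)) * ((1 + ψB) * πB)))
    (ψmin : ℝ) (hψminA : ψmin < ψA)
    (η : ℝ)
    (hη : η = ((NBT / (kB : ℝ)) * πB * (ψB - ψmin)) /
      ((NAT / (kA : ℝ)) * πA * (ψA - ψmin) + (NBT / (kB : ℝ)) * πB * (ψB - ψmin))) :
    D ψmin > 0 ↔
      (1 - η) * qA * (((kA : ℝ) - 1) / (kA : ℝ)) * ((1 + ψmin) / (1 + ψA)) +
        η * qB * (((kB : ℝ) - 1) / (kB : ℝ)) * ((1 + ψmin) / (1 + ψB)) > 1 := by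
  have hkA0 : (0 : ℝ) < kA := by exact_mod_cast (by omega : 0 < kA)
  have hkB0 : (0 : ℝ) < kB := by exact_mod_cast (by omega : 0 < kB)
  have hwA : 0 < NAT / kA * πA * (ψA - ψmin) := by
    have := sub_pos.2 hψminA
    positivity
  have hwB : 0 < NBT / kB * πB * (ψB - ψmin) := by
    have := sub_pos.2 (hψminA.trans_le hAB)
    positivity
  rw [hD, premium_change_eq _ _ _ _ _ _ (by linarith),
    premium_change_eq _ _ _ _ _ _ (by linarith), hη, gt_iff_lt, gt_iff_lt,
    one_lt_weighted_mean_iff _ _ (add_pos hwA hwB)]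
  ring_nf

/-- For `0 ≤ ψ_min < ψ_A`, `D(ψ_min) > 0` iff
`(1−η)q_A((k_A−1)/k_A)((1+ψ_min)/(1+ψ_A)) + ηq_B((k_B−1)/k_B)((1+ψ_min)/(1+ψ_B)) > 1`
(endpoint characterization at `ψ⋆ = ψ_min`). -/
theorem D_pos_at_psimin_iff
    (NAT NBT πA πB qA qB ψA ψB : ℝ)
    (kA kB : ℕ) (hkA : 2 ≤ kA) (hkB : 2 ≤ kB)
    (hNAT : 0 < NAT) (hNBT : 0 < NBT) (hπA : 0 < πA) (hπB : 0 < πB)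
    (hqA : 0 < qA) (hqB : 0 < qB)
    (hψA : 0 < ψA) (hAB : ψA ≤ ψB)
    (D : ℝ → ℝ)
    (hD : ∀ ψs : ℝ, D ψs =
      ((NAT / (kA : ℝ)) * (1 - ((kA : ℝ) - 1) / (kA : ℝ) * qA * ((ψs - ψA) / (1 + ψA))) *
          ((1 + ψs) * πA) -
        (NAT / (kA : ℝ)) * ((1 + ψA) * πA)) +
      ((NBT / (kB : ℝ)) * (1 - ((kB : ℝ) - 1) / (kB : ℝ) * qB * ((ψs - ψB) / (1 + ψB))) *
          ((1 + ψs) * πB) -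
        (NBT / (kB : ℝ)) * ((1 + ψB) * πB)))
    (ψmin : ℝ) (hψmin0 : 0 ≤ ψmin) (hψminA : ψmin < ψA)
    (η : ℝ)
    (hη : η = ((NBT / (kB : ℝ)) * πB * (ψB - ψmin)) /
      ((NAT / (kA : ℝ)) * πA * (ψA - ψmin) + (NBT / (kB : ℝ)) * πB * (ψB - ψmin))) :
    D ψmin > 0 ↔
      (1 - η) * qA * (((kA : ℝ) - 1) / (kA : ℝ)) * ((1 + ψmin) / (1 + ψA)) +
        η * qB * (((kB : ℝ) - 1) / (kB : ℝ)) * ((1 + ψmin) / (1 + ψB)) > 1 :=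
  D_pos_at_psimin_iff_general NAT NBT πA πB qA qB ψA ψB kA kB hkA hkB hNAT hNBT hπA hπB hψA hAB D hD
    ψmin hψminA η hη
end

section
/- (Theorem 1, part 2, case w^d < w_ct, where the joint loading lies in [ψ_min, ψ_A).) Let ψ_min be a real with 0 ≤ ψ_min < ψ_A. If q_B < k_B/(k_B−1) and q_A < k_A/(k_A−1), then D(ψ⋆) < 0 for every ψ⋆ ∈ [ψ_min, ψ_A); that is, the insurer collects strictly more premiums by pricing the two business lines separately rather than jointly. -/
lemma aux_term_neg (N π q ψ ψs a : ℝ)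
    (hN : 0 < N) (hπ : 0 < π) (hq : 0 < q) (ha : 0 < a) (haq : a * q < 1)
    (hψ : 0 < ψ) (hlt : ψs < ψ) :
    N * (1 - a * q * ((ψs - ψ) / (1 + ψ))) * ((1 + ψs) * π) - N * ((1 + ψ) * π) < 0 := by
  have hd : (0:ℝ) < 1 + ψ := by linarith
  set c : ℝ := (ψs - ψ) / (1 + ψ) with hcdef
  have hc : c * (1 + ψ) = ψs - ψ := div_mul_cancel₀ _ (ne_of_gt hd)
  have hcneg : c < 0 := div_neg_of_neg_of_pos (by linarith) hd
  have hNπ : 0 < N * π := mul_pos hN hπ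
  have h1s : 1 + ψs = (1 + c) * (1 + ψ) := by nlinarith
  have key : (1 - a * q * c) * (1 + ψs) - (1 + ψ) < 0 := by
    rw [h1s]
    have haqc : 0 < -(a * q) * c + (1 - a * q) := by
      have : 0 < a * q := mul_pos ha hq
      nlinarith
    nlinarith [mul_pos (mul_pos (neg_pos.mpr hcneg) haqc) hd]
  nlinarith


/-- Theorem 1, part 2, case `w^d < w_ct`: if `q_B < k_B/(k_B−1)` and
`q_A < k_A/(k_A−1)`, then `D(ψ⋆) < 0` for every `ψ⋆ ∈ [ψ_min, ψ_A)`. -/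
theorem standalone_pricing_better_below_threshold
    (NAT NBT πA πB qA qB ψA ψB : ℝ)
    (kA kB : ℕ) (hkA : 2 ≤ kA) (hkB : 2 ≤ kB)
    (hNAT : 0 < NAT) (hNBT : 0 < NBT) (hπA : 0 < πA) (hπB : 0 < πB)
    (hqA : 0 < qA) (hqB : 0 < qB)
    (hψA : 0 < ψA) (hAB : ψA ≤ ψB)
    (D : ℝ → ℝ)
    (hD : ∀ ψs : ℝ, D ψs =
      ((NAT / (kA : ℝ)) * (1 - ((kA : ℝ) - 1) / (kA : ℝ) * qA * ((ψs - ψA) / (1 + ψA))) *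
          ((1 + ψs) * πA) -
        (NAT / (kA : ℝ)) * ((1 + ψA) * πA)) +
      ((NBT / (kB : ℝ)) * (1 - ((kB : ℝ) - 1) / (kB : ℝ) * qB * ((ψs - ψB) / (1 + ψB))) *
          ((1 + ψs) * πB) -
        (NBT / (kB : ℝ)) * ((1 + ψB) * πB)))
    (ψmin : ℝ) (hψmin0 : 0 ≤ ψmin) (hψminA : ψmin < ψA)
    (hqB_cond : qB < (kB : ℝ) / ((kB : ℝ) - 1))
    (hqA_cond : qA < (kA : ℝ) / ((kA : ℝ) - 1)) :
    ∀ ψs ∈ Set.Ico ψmin ψA, D ψs < 0 := by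
  intro ψs hψs
  obtain ⟨h1, h2⟩ := hψs
  have hkA' : (2:ℝ) ≤ (kA:ℝ) := by exact_mod_cast hkA
  have hkB' : (2:ℝ) ≤ (kB:ℝ) := by exact_mod_cast hkB
  have hkA0 : (0:ℝ) < (kA:ℝ) := by linarith
  have hkB0 : (0:ℝ) < (kB:ℝ) := by linarith
  have hkA1 : (0:ℝ) < (kA:ℝ) - 1 := by linarith
  have hkB1 : (0:ℝ) < (kB:ℝ) - 1 := by linarith
  have haA : 0 < ((kA:ℝ) - 1) / (kA:ℝ) := div_pos hkA1 hkA0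
  have haB : 0 < ((kB:ℝ) - 1) / (kB:ℝ) := div_pos hkB1 hkB0
  have haqA : ((kA:ℝ) - 1) / (kA:ℝ) * qA < 1 := by
    rw [div_mul_eq_mul_div, div_lt_one hkA0]
    rw [lt_div_iff₀ hkA1] at hqA_cond
    linarith
  have haqB : ((kB:ℝ) - 1) / (kB:ℝ) * qB < 1 := by
    rw [div_mul_eq_mul_div, div_lt_one hkB0]
    rw [lt_div_iff₀ hkB1] at hqB_cond
    linarith
  have hNA : 0 < NAT / (kA:ℝ) := div_pos hNAT hkA0
  have hNB : 0 < NBT / (kB:ℝ) := div_pos hNBT hkB0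
  rw [hD]
  have tA := aux_term_neg (NAT / (kA:ℝ)) πA qA ψA ψs (((kA:ℝ) - 1) / (kA:ℝ))
    hNA hπA hqA haA haqA hψA h2
  have tB := aux_term_neg (NBT / (kB:ℝ)) πB qB ψB ψs (((kB:ℝ) - 1) / (kB:ℝ))
    hNB hπB hqB haB haqB (by linarith) (by linarith)
  linarith
end

section
/- (Theorem 1, part 2, case w^d > w_ct, where the joint loading lies in (ψ_A, ψ_B].) If q_B < k_B/(k_B−1) and q_A > k_A/(k_A−1), then D(ψ⋆) < 0 for every ψ⋆ ∈ (ψ_A, ψ_B]; that is, the insurer collects strictly more premiums by pricing the two business lines separately rather than jointly. -/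
set_option maxHeartbeats 1000000 in
/-- Theorem 1, part 2, case `w^d > w_ct`: if `q_B < k_B/(k_B−1)` and
`q_A > k_A/(k_A−1)`, then `D(ψ⋆) < 0` for every `ψ⋆ ∈ (ψ_A, ψ_B]`. -/
theorem standalone_pricing_better_above_threshold
    (NAT NBT πA πB qA qB ψA ψB : ℝ)
    (kA kB : ℕ) (hkA : 2 ≤ kA) (hkB : 2 ≤ kB)
    (hNAT : 0 < NAT) (hNBT : 0 < NBT) (hπA : 0 < πA) (hπB : 0 < πB)
    (hqA : 0 < qA) (hqB : 0 < qB)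
    (hψA : 0 < ψA) (hAB : ψA ≤ ψB)
    (D : ℝ → ℝ)
    (hD : ∀ ψs : ℝ, D ψs =
      ((NAT / (kA : ℝ)) * (1 - ((kA : ℝ) - 1) / (kA : ℝ) * qA * ((ψs - ψA) / (1 + ψA))) *
          ((1 + ψs) * πA) -
        (NAT / (kA : ℝ)) * ((1 + ψA) * πA)) +
      ((NBT / (kB : ℝ)) * (1 - ((kB : ℝ) - 1) / (kB : ℝ) * qB * ((ψs - ψB) / (1 + ψB))) *
          ((1 + ψs) * πB) -
        (NBT / (kB : ℝ)) * ((1 + ψB) * πB)))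
    (hqB_cond : qB < (kB : ℝ) / ((kB : ℝ) - 1))
    (hqA_cond : qA > (kA : ℝ) / ((kA : ℝ) - 1)) :
    ∀ ψs ∈ Set.Ioc ψA ψB, D ψs < 0 := by
  intro ψs hψs
  obtain ⟨h1, h2⟩ := hψs
  rw [hD]
  have hkA2 : (2:ℝ) ≤ (kA:ℝ) := by exact_mod_cast hkA
  have hkB2 : (2:ℝ) ≤ (kB:ℝ) := by exact_mod_cast hkB
  have hkA0 : (0:ℝ) < (kA:ℝ) := by linarith
  have hkB0 : (0:ℝ) < (kB:ℝ) := by linarith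
  have hkA1 : (0:ℝ) < (kA:ℝ) - 1 := by linarith
  have hkB1 : (0:ℝ) < (kB:ℝ) - 1 := by linarith
  have hψA1 : (0:ℝ) < 1 + ψA := by linarith
  have hψB1 : (0:ℝ) < 1 + ψB := by linarith
  have hψs1 : (0:ℝ) < 1 + ψs := by linarith
  have haA : 1 < ((kA:ℝ)-1)/(kA:ℝ) * qA := by
    rw [div_mul_eq_mul_div, lt_div_iff₀ hkA0]
    have h := (div_lt_iff₀ hkA1).mp hqA_cond
    nlinarith
  have haB0 : 0 < ((kB:ℝ)-1)/(kB:ℝ) * qB := by positivity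
  have haB : ((kB:ℝ)-1)/(kB:ℝ) * qB < 1 := by
    rw [div_mul_eq_mul_div, div_lt_iff₀ hkB0]
    have h := (lt_div_iff₀ hkB1).mp hqB_cond
    nlinarith
  have hrAeq : (ψs - ψA)/(1+ψA) * (1+ψA) = ψs - ψA := div_mul_cancel₀ _ (ne_of_gt hψA1)
  have hrApos : 0 < (ψs - ψA)/(1+ψA) := div_pos (sub_pos.mpr h1) hψA1
  have hrBeq : (ψs - ψB)/(1+ψB) * (1+ψB) = ψs - ψB := div_mul_cancel₀ _ (ne_of_gt hψB1)
  have hrBnp : (ψs - ψB)/(1+ψB) ≤ 0 := by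
    apply div_nonpos_of_nonpos_of_nonneg <;> linarith
  have hcoreA : (1 - ((kA:ℝ)-1)/(kA:ℝ) * qA * ((ψs - ψA)/(1+ψA))) * (1+ψs) < 1+ψA := by
    nlinarith [mul_pos hrApos hψs1, mul_pos hrApos hψA1,
      mul_pos (sub_pos.mpr haA) (mul_pos hrApos hψs1),
      mul_pos hrApos (sub_pos.mpr h1)]
  have hcoreB : (1 - ((kB:ℝ)-1)/(kB:ℝ) * qB * ((ψs - ψB)/(1+ψB))) * (1+ψs) ≤ 1+ψB := by
    nlinarith [mul_nonpos_of_nonpos_of_nonneg hrBnp hψs1.le,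
      mul_nonpos_of_nonpos_of_nonneg hrBnp hψB1.le,
      mul_nonneg (sub_pos.mpr haB).le (neg_nonneg.mpr (mul_nonpos_of_nonpos_of_nonneg hrBnp hψs1.le)),
      mul_nonneg (neg_nonneg.mpr hrBnp) (sub_nonneg.mpr h2)]
  have hposA : 0 < NAT/(kA:ℝ) * πA := by positivity
  have hposB : 0 < NBT/(kB:ℝ) * πB := by positivity
  have hA : (NAT / (kA : ℝ)) * (1 - ((kA : ℝ) - 1) / (kA : ℝ) * qA * ((ψs - ψA) / (1 + ψA))) *
          ((1 + ψs) * πA) - (NAT / (kA : ℝ)) * ((1 + ψA) * πA) < 0 := by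
    have key : (NAT / (kA : ℝ)) * (1 - ((kA : ℝ) - 1) / (kA : ℝ) * qA * ((ψs - ψA) / (1 + ψA))) *
          ((1 + ψs) * πA) - (NAT / (kA : ℝ)) * ((1 + ψA) * πA)
        = (NAT/(kA:ℝ) * πA) *
          ((1 - ((kA:ℝ)-1)/(kA:ℝ) * qA * ((ψs - ψA)/(1+ψA))) * (1+ψs) - (1+ψA)) := by ring
    rw [key]
    exact mul_neg_of_pos_of_neg hposA (by linarith)
  have hB : (NBT / (kB : ℝ)) * (1 - ((kB : ℝ) - 1) / (kB : ℝ) * qB * ((ψs - ψB) / (1 + ψB))) *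
          ((1 + ψs) * πB) - (NBT / (kB : ℝ)) * ((1 + ψB) * πB) ≤ 0 := by
    have key : (NBT / (kB : ℝ)) * (1 - ((kB : ℝ) - 1) / (kB : ℝ) * qB * ((ψs - ψB) / (1 + ψB))) *
          ((1 + ψs) * πB) - (NBT / (kB : ℝ)) * ((1 + ψB) * πB)
        = (NBT/(kB:ℝ) * πB) *
          ((1 - ((kB:ℝ)-1)/(kB:ℝ) * qB * ((ψs - ψB)/(1+ψB))) * (1+ψs) - (1+ψB)) := by ring
    rw [key]
    exact mul_nonpos_of_nonneg_of_nonpos hposB.le (by linarith)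
  linarith
end

section
/- (Corollary 1, part 2.) Let ψ_min be a real with 0 ≤ ψ_min < ψ_A. Suppose q_B < 1. Then: (i) if q_A < 1, then D(ψ⋆) < 0 for every ψ⋆ ∈ [ψ_min, ψ_A) (the case w^d < w_ct); and (ii) if q_A > 2, then D(ψ⋆) < 0 for every ψ⋆ ∈ (ψ_A, ψ_B] (the case w^d > w_ct). In both cases the insurer collects strictly more premiums by pricing the two business lines separately rather than jointly. -/
private lemma termD_eq (N π q ψL ψs : ℝ) (k : ℕ) (hψL : (0:ℝ) < 1 + ψL)
    (hk : 2 ≤ k) :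
    (N / (k : ℝ)) * (1 - ((k : ℝ) - 1) / (k : ℝ) * q * ((ψs - ψL) / (1 + ψL))) *
        ((1 + ψs) * π) - (N / (k : ℝ)) * ((1 + ψL) * π)
    = (N * π / (k : ℝ)) *
        ((ψs - ψL) * (1 - ((k : ℝ) - 1) / (k : ℝ) * q * ((1 + ψs) / (1 + ψL)))) := by
  have hk0 : (k : ℝ) ≠ 0 := by positivity
  have h1 : (1 + ψL) ≠ 0 := ne_of_gt hψL
  field_simp
  ring

private lemma term_neg_small (N π q ψL ψs : ℝ) (k : ℕ) (hk : 2 ≤ k)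
    (hN : 0 < N) (hπ : 0 < π) (hq : 0 < q) (hq1 : q < 1)
    (hψs : (0:ℝ) < 1 + ψs) (hlt : ψs < ψL) :
    (N * π / (k : ℝ)) *
        ((ψs - ψL) * (1 - ((k : ℝ) - 1) / (k : ℝ) * q * ((1 + ψs) / (1 + ψL)))) < 0 := by
  have hk0 : (0:ℝ) < (k : ℝ) := by positivity
  have hψL : (0:ℝ) < 1 + ψL := by linarith
  have ha0 : 0 ≤ ((k : ℝ) - 1) / (k : ℝ) := by
    apply div_nonneg _ (le_of_lt hk0)
    have : (2:ℝ) ≤ (k:ℝ) := by exact_mod_cast hk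
    linarith
  have ha1 : ((k : ℝ) - 1) / (k : ℝ) < 1 := by
    rw [div_lt_one hk0]; linarith
  have hr0 : 0 < (1 + ψs) / (1 + ψL) := by positivity
  have hr1 : (1 + ψs) / (1 + ψL) < 1 := by
    rw [div_lt_one hψL]; linarith
  have hF : 0 < 1 - ((k : ℝ) - 1) / (k : ℝ) * q * ((1 + ψs) / (1 + ψL)) := by
    nlinarith [mul_pos hq hr0]
  have hcoef : 0 < N * π / (k : ℝ) := by positivity
  have : (ψs - ψL) * (1 - ((k : ℝ) - 1) / (k : ℝ) * q * ((1 + ψs) / (1 + ψL))) < 0 :=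
    mul_neg_of_neg_of_pos (by linarith) hF
  exact mul_neg_of_pos_of_neg hcoef this

private lemma term_nonpos_small (N π q ψL ψs : ℝ) (k : ℕ) (hk : 2 ≤ k)
    (hN : 0 < N) (hπ : 0 < π) (hq : 0 < q) (hq1 : q < 1)
    (hψs : (0:ℝ) < 1 + ψs) (hle : ψs ≤ ψL) :
    (N * π / (k : ℝ)) *
        ((ψs - ψL) * (1 - ((k : ℝ) - 1) / (k : ℝ) * q * ((1 + ψs) / (1 + ψL)))) ≤ 0 := by
  rcases lt_or_eq_of_le hle with h | h
  · exact le_of_lt (term_neg_small N π q ψL ψs k hk hN hπ hq hq1 hψs h)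
  · subst h; simp

private lemma term_neg_big (N π q ψL ψs : ℝ) (k : ℕ) (hk : 2 ≤ k)
    (hN : 0 < N) (hπ : 0 < π) (hq : 2 < q)
    (hψL : (0:ℝ) < 1 + ψL) (hlt : ψL < ψs) :
    (N * π / (k : ℝ)) *
        ((ψs - ψL) * (1 - ((k : ℝ) - 1) / (k : ℝ) * q * ((1 + ψs) / (1 + ψL)))) < 0 := by
  have hk0 : (0:ℝ) < (k : ℝ) := by positivity
  have hk2 : (2:ℝ) ≤ (k:ℝ) := by exact_mod_cast hk
  have ha : (1:ℝ)/2 ≤ ((k : ℝ) - 1) / (k : ℝ) := by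
    rw [div_le_div_iff₀ (by norm_num) hk0]; linarith
  have hr1 : 1 < (1 + ψs) / (1 + ψL) := by
    rw [lt_div_iff₀ hψL]; linarith
  have haq : 1 < ((k : ℝ) - 1) / (k : ℝ) * q := by nlinarith
  have hF : 1 - ((k : ℝ) - 1) / (k : ℝ) * q * ((1 + ψs) / (1 + ψL)) < 0 := by
    nlinarith [mul_lt_mul_of_pos_left hr1 (show (0:ℝ) < ((k : ℝ) - 1) / (k : ℝ) * q by linarith)]
  have hcoef : 0 < N * π / (k : ℝ) := by positivity
  have : (ψs - ψL) * (1 - ((k : ℝ) - 1) / (k : ℝ) * q * ((1 + ψs) / (1 + ψL))) < 0 :=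
    mul_neg_of_pos_of_neg (by linarith) hF
  exact mul_neg_of_pos_of_neg hcoef this

/-- Corollary 1, part 2: if `q_B < 1`, then
(i) `q_A < 1` implies `D(ψ⋆) < 0` on `[ψ_min, ψ_A)`, and
(ii) `q_A > 2` implies `D(ψ⋆) < 0` on `(ψ_A, ψ_B]`. -/
theorem corollary_standalone_pricing_better
    (NAT NBT πA πB qA qB ψA ψB : ℝ)
    (kA kB : ℕ) (hkA : 2 ≤ kA) (hkB : 2 ≤ kB)
    (hNAT : 0 < NAT) (hNBT : 0 < NBT) (hπA : 0 < πA) (hπB : 0 < πB)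
    (hqA : 0 < qA) (hqB : 0 < qB)
    (hψA : 0 < ψA) (hAB : ψA ≤ ψB)
    (D : ℝ → ℝ)
    (hD : ∀ ψs : ℝ, D ψs =
      ((NAT / (kA : ℝ)) * (1 - ((kA : ℝ) - 1) / (kA : ℝ) * qA * ((ψs - ψA) / (1 + ψA))) *
          ((1 + ψs) * πA) -
        (NAT / (kA : ℝ)) * ((1 + ψA) * πA)) +
      ((NBT / (kB : ℝ)) * (1 - ((kB : ℝ) - 1) / (kB : ℝ) * qB * ((ψs - ψB) / (1 + ψB))) *
          ((1 + ψs) * πB) -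
        (NBT / (kB : ℝ)) * ((1 + ψB) * πB)))
    (ψmin : ℝ) (hψmin0 : 0 ≤ ψmin) (hψminA : ψmin < ψA)
    (hqB_cond : qB < 1) :
    (qA < 1 → ∀ ψs ∈ Set.Ico ψmin ψA, D ψs < 0) ∧
      (qA > 2 → ∀ ψs ∈ Set.Ioc ψA ψB, D ψs < 0) := by
  have h1A : (0:ℝ) < 1 + ψA := by linarith
  have h1B : (0:ℝ) < 1 + ψB := by linarith
  constructor
  · intro hqA1 ψs hψs
    obtain ⟨h1, h2⟩ := hψs
    have hψs1 : (0:ℝ) < 1 + ψs := by linarith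
    rw [hD ψs, termD_eq NAT πA qA ψA ψs kA h1A hkA,
      termD_eq NBT πB qB ψB ψs kB h1B hkB]
    have tA := term_neg_small NAT πA qA ψA ψs kA hkA hNAT hπA hqA hqA1 hψs1 h2
    have tB := term_neg_small NBT πB qB ψB ψs kB hkB hNBT hπB hqB hqB_cond hψs1
      (by linarith)
    linarith
  · intro hqA2 ψs hψs
    obtain ⟨h1, h2⟩ := hψs
    have hψs1 : (0:ℝ) < 1 + ψs := by linarith
    rw [hD ψs, termD_eq NAT πA qA ψA ψs kA h1A hkA,
      termD_eq NBT πB qB ψB ψs kB h1B hkB]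
    have tA := term_neg_big NAT πA qA ψA ψs kA hkA hNAT hπA hqA2 h1A h1
    have tB := term_nonpos_small NBT πB qB ψB ψs kB hkB hNBT hπB hqB hqB_cond hψs1 h2
    linarith
end
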